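/- For every α ∈ [0,1] and every pair of distinct vertices x, y of G, the α-Ricci curvature satisfies κ_α(x,y) ≤ (1−α)·2/d(x,y). -/

import Mathlib

open Finset Filter Topology

noncomputable section

/-- A coupling between two (probability) mass functions `μ` and `ν` on a finite
vertex set: a matrix with values in `[0,1]` whose row sums are `μ` and whose
column sums are `ν`. -/
def IsCoupling {V : Type*} [Fintype V] (A : V → V → ℝ) (μ ν : V → ℝ) : Prop :=
  (∀ x y, 0 ≤ A x y ∧ A x y ≤ 1) ∧
  (∀ x, ∑ y, A x y = μ x) ∧
  (∀ y, ∑ x, A x y = ν y)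

/-- The (1-)Wasserstein distance between two mass functions on the vertex set of a
graph, with respect to the graph distance. -/
def Wass {V : Type*} [Fintype V] (G : SimpleGraph V) (μ ν : V → ℝ) : ℝ :=
  sInf {c | ∃ A : V → V → ℝ, IsCoupling A μ ν ∧
    c = ∑ x, ∑ y, A x y * (G.dist x y : ℝ)}

/-- The probability measure `m_x^α`: mass `α` at `x`, mass `(1-α)/d_x` at each
neighbor of `x`, and `0` elsewhere. -/
def mMeas {V : Type*} [Fintype V] [DecidableEq V] (G : SimpleGraph V)
    [DecidableRel G.Adj] (α : ℝ) (x : V) : V → ℝ :=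
  fun z => if z = x then α else if G.Adj x z then (1 - α) / (G.degree x : ℝ) else 0

/-- The `α`-Ricci curvature `κ_α(x,y) = 1 - W(m_x^α, m_y^α)/d(x,y)`. -/
def kappaAlpha {V : Type*} [Fintype V] [DecidableEq V] (G : SimpleGraph V)
    [DecidableRel G.Adj] (α : ℝ) (x y : V) : ℝ :=
  1 - Wass G (mMeas G α x) (mMeas G α y) / (G.dist x y : ℝ)

/-- The Lin–Lu–Yau Ricci curvature `κ(x,y) = lim_{α→1⁻} κ_α(x,y)/(1-α)`. -/
def kappa {V : Type*} [Fintype V] [DecidableEq V] (G : SimpleGraph V)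
    [DecidableRel G.Adj] (x y : V) : ℝ :=
  limUnder (𝓝[<] (1 : ℝ)) (fun α => kappaAlpha G α x y / (1 - α))

/-- The (non-normalized) graph Laplacian `(Δf)(x) = d_x f(x) - ∑_{y ~ x} f(y)`. -/
def lap {V : Type*} [Fintype V] [DecidableEq V] (G : SimpleGraph V)
    [DecidableRel G.Adj] (f : V → ℝ) (x : V) : ℝ :=
  (G.degree x : ℝ) * f x - ∑ y ∈ G.neighborFinset x, f y

end

/-!
Kantorovich weak duality with the 1-Lipschitz potential `f = d(x, ·)` gives
`W(m_x, m_y) ≥ E_{m_y} f - E_{m_x} f`. Here `E_{m_x} f = 1 - α`, and by the triangle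
inequality `f ≥ d(x,y) - d(·, y)`, so `E_{m_y} f ≥ d(x,y) - (1 - α)`. Hence
`W ≥ d(x,y) - 2(1 - α)`, which is the claim after dividing by `d(x,y)`.
-/

section Coupling

variable {V : Type*} [Fintype V] {μ ν : V → ℝ}

theorem isCoupling_mul (hμ : ∀ u, 0 ≤ μ u) (hμ1 : ∑ u, μ u = 1)
    (hν : ∀ v, 0 ≤ ν v) (hν1 : ∑ v, ν v = 1) :
    IsCoupling (fun u v => μ u * ν v) μ ν := by
  have le_one {ρ : V → ℝ} (hρ : ∀ u, 0 ≤ ρ u) (hρ1 : ∑ u, ρ u = 1) (u : V) : ρ u ≤ 1 :=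
    hρ1 ▸ single_le_sum (fun w _ => hρ w) (mem_univ u)
  refine ⟨fun u v => ⟨mul_nonneg (hμ u) (hν v), ?_⟩, fun u => ?_, fun v => ?_⟩
  · exact mul_le_one₀ (le_one hμ hμ1 u) (hν v) (le_one hν hν1 v)
  · rw [← mul_sum, hν1, mul_one]
  · rw [← sum_mul, hμ1, one_mul]

theorem IsCoupling.sum_sub_sum_le_cost {A : V → V → ℝ} (hA : IsCoupling A μ ν)
    (c : V → V → ℝ) {f : V → ℝ} (hf : ∀ u v, f v - f u ≤ c u v) :
    ∑ v, ν v * f v - ∑ u, μ u * f u ≤ ∑ u, ∑ v, A u v * c u v := by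
  obtain ⟨hA01, hrow, hcol⟩ := hA
  calc ∑ v, ν v * f v - ∑ u, μ u * f u
      = ∑ u, ∑ v, A u v * (f v - f u) := by
        simp only [mul_sub, sum_sub_distrib, ← hcol, ← hrow, sum_mul]
        rw [sum_comm]
    _ ≤ ∑ u, ∑ v, A u v * c u v :=
        sum_le_sum fun u _ => sum_le_sum fun v _ =>
          mul_le_mul_of_nonneg_left (hf u v) (hA01 u v).1

theorem sum_sub_sum_le_wass (G : SimpleGraph V) (hμ : ∀ u, 0 ≤ μ u) (hμ1 : ∑ u, μ u = 1)
    (hν : ∀ v, 0 ≤ ν v) (hν1 : ∑ v, ν v = 1) {f : V → ℝ}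
    (hf : ∀ u v, f v - f u ≤ G.dist u v) :
    ∑ v, ν v * f v - ∑ u, μ u * f u ≤ Wass G μ ν :=
  le_csInf ⟨_, _, isCoupling_mul hμ hμ1 hν hν1, rfl⟩ <| by
    rintro _ ⟨A, hA, rfl⟩
    exact hA.sum_sub_sum_le_cost _ hf

end Coupling

theorem SimpleGraph.sum_ite_adj {V : Type*} [Fintype V] (G : SimpleGraph V)
    [DecidableRel G.Adj] (x : V) (a : ℝ) :
    ∑ z, (if G.Adj x z then a else 0) = G.degree x * a := by
  rw [← sum_filter, ← G.neighborFinset_eq_filter, sum_const, G.card_neighborFinset_eq_degree,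
    nsmul_eq_mul]

section RandomWalk

variable {V : Type*} [Fintype V] [DecidableEq V] (G : SimpleGraph V) [DecidableRel G.Adj]
  {α : ℝ} {x y : V}

theorem mMeas_nonneg (hα : α ∈ Set.Icc (0 : ℝ) 1) (z : V) : 0 ≤ mMeas G α x z := by
  unfold mMeas
  split_ifs
  · exact hα.1
  · exact div_nonneg (sub_nonneg.2 hα.2) (Nat.cast_nonneg _)
  · exact le_rfl

theorem sum_mMeas (hx : G.degree x ≠ 0) : ∑ z, mMeas G α x z = 1 := by
  have split (z : V) : mMeas G α x z =
      (if x = z then α else 0) + if G.Adj x z then (1 - α) / G.degree x else 0 := by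
    unfold mMeas
    by_cases hz : z = x
    · simp [hz]
    · simp [hz, Ne.symm hz]
  rw [sum_congr rfl fun z _ => split z, sum_add_distrib, sum_ite_eq, G.sum_ite_adj,
    if_pos (mem_univ x)]
  field_simp
  ring

theorem sum_mMeas_mul_dist (hx : G.degree x ≠ 0) :
    ∑ z, mMeas G α x z * G.dist x z = 1 - α := by
  have split (z : V) : mMeas G α x z * G.dist x z =
      if G.Adj x z then (1 - α) / G.degree x else 0 := by
    unfold mMeas
    by_cases hz : z = x
    · simp [hz]
    · by_cases hadj : G.Adj x z
      · simp [hz, hadj, SimpleGraph.dist_eq_one_iff_adj.2 hadj]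
      · simp [hz, hadj]
  rw [sum_congr rfl fun z _ => split z, G.sum_ite_adj]
  field_simp

theorem sub_le_sum_mMeas_mul_dist (hconn : G.Connected) (hα : α ∈ Set.Icc (0 : ℝ) 1)
    (hy : G.degree y ≠ 0) (x : V) :
    (G.dist x y : ℝ) - (1 - α) ≤ ∑ v, mMeas G α y v * G.dist x v :=
  calc (G.dist x y : ℝ) - (1 - α) = ∑ v, mMeas G α y v * (G.dist x y - G.dist y v) := by
        simp only [mul_sub, sum_sub_distrib, ← sum_mul, sum_mMeas G hy,
          sum_mMeas_mul_dist G hy, one_mul]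
    _ ≤ ∑ v, mMeas G α y v * G.dist x v := by
        refine sum_le_sum fun v _ => mul_le_mul_of_nonneg_left ?_ (mMeas_nonneg G hα v)
        rw [sub_le_iff_le_add, G.dist_comm (u := y)]
        exact_mod_cast hconn.dist_triangle

end RandomWalk

theorem stmt8_general {V : Type*} [Fintype V] [DecidableEq V]
    (G : SimpleGraph V) [DecidableRel G.Adj]
    (hconn : G.Connected)
    (α : ℝ) (hα : α ∈ Set.Icc (0 : ℝ) 1) (x y : V) (hxy : x ≠ y) :
    kappaAlpha G α x y ≤ (1 - α) * (2 / (G.dist x y : ℝ)) := by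
  have hdx : G.degree x ≠ 0 := ((hconn x y).degree_pos_left hxy).ne'
  have hdy : G.degree y ≠ 0 := ((hconn x y).degree_pos_right hxy).ne'
  have hD : (0 : ℝ) < G.dist x y := by exact_mod_cast hconn.pos_dist_of_ne hxy
  have hlip (u v : V) : (G.dist x v : ℝ) - G.dist x u ≤ G.dist u v :=
    sub_le_iff_le_add'.2 (mod_cast hconn.dist_triangle)
  have hW := sum_sub_sum_le_wass G (mMeas_nonneg G hα) (sum_mMeas G hdx)
    (mMeas_nonneg G hα) (sum_mMeas G hdy) hlip
  rw [sum_mMeas_mul_dist G hdx] at hW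
  have hy := sub_le_sum_mMeas_mul_dist G hconn hα hdy x
  rw [kappaAlpha, mul_div_assoc', sub_le_iff_le_add, ← add_div, le_div_iff₀ hD]
  linarith

theorem stmt8 {V : Type*} [Fintype V] [DecidableEq V]
    (G : SimpleGraph V) [DecidableRel G.Adj]
    (hconn : G.Connected) (hcard : 1 < Fintype.card V)
    (α : ℝ) (hα : α ∈ Set.Icc (0 : ℝ) 1) (x y : V) (hxy : x ≠ y) :
    kappaAlpha G α x y ≤ (1 - α) * (2 / (G.dist x y : ℝ)) :=
  stmt8_general G hconn α hα x y hxy
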